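/- arXiv:1604.05276 — 3 statements merged into one kernel-verified Lean document; each statement's English description precedes it below -/
import Mathlib

section
/- Let m = 2^k with k ≥ 3, and suppose Φ ⊆ P(m) satisfies P(m) = Φ ⊔ Φ⁻¹ (disjoint union). Then the set Φ³ = {abc : a, b, c ∈ Φ} is not contained in Φ. -/
theorem stmt2 (k m : ℕ) (hk : 3 ≤ k) (hm : m = 2 ^ k) (Φ : Set ℂ)
    (hcover : {z : ℂ | IsPrimitiveRoot z m} = Φ ∪ Φ⁻¹)
    (hdisj : Φ ∩ Φ⁻¹ = ∅) :
    ¬ (∀ a ∈ Φ, ∀ b ∈ Φ, ∀ c ∈ Φ, a * b * c ∈ Φ) := by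
  intro hcl
  have hm0 : m ≠ 0 := by
    subst hm; positivity
  obtain ⟨z, hz⟩ : ∃ z : ℂ, IsPrimitiveRoot z m :=
    ⟨Complex.exp (2 * Real.pi * Complex.I / m), Complex.isPrimitiveRoot_exp m hm0⟩
  have hzmem : z ∈ Φ ∪ Φ⁻¹ := by rw [← hcover]; exact hz
  obtain ⟨a, ha, hap⟩ : ∃ a, a ∈ Φ ∧ IsPrimitiveRoot a m := by
    cases hzmem with
    | inl h => exact ⟨z, h, hz⟩
    | inr h => exact ⟨z⁻¹, Set.mem_inv.mp h, hz.inv⟩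
  have hodd : ∀ j, a ^ (2 * j + 1) ∈ Φ := by
    intro j
    induction j with
    | zero => simpa using ha
    | succ n ih =>
      have h := hcl a ha a ha _ ih
      have he : a * a * a ^ (2 * n + 1) = a ^ (2 * (n + 1) + 1) := by ring
      rwa [he] at h
  have hmodd : m - 1 = 2 * ((m - 1) / 2) + 1 := by
    have h2 : 2 ∣ m := by
      subst hm; exact dvd_pow_self 2 (by omega)
    omega
  have h1 : a ^ m = 1 := hap.pow_eq_one
  have ha0 : a ≠ 0 := by
    intro h; rw [h] at h1; simp [hm0] at h1
  have hainv : a⁻¹ = a ^ (m - 1) := by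
    refine (eq_inv_of_mul_eq_one_left ?_).symm
    rw [← pow_succ]
    have : m - 1 + 1 = m := by omega
    rw [this, h1]
  have hmem : a ∈ Φ⁻¹ := Set.mem_inv.mpr (by rw [hainv, hmodd]; exact hodd _)
  have : a ∈ Φ ∩ Φ⁻¹ := ⟨ha, hmem⟩
  rw [hdisj] at this
  exact this
end

section
/- Let m ∈ {9, 18} and suppose A ⊆ (ℤ/mℤ)* and λ ∈ (ℤ/mℤ)* satisfy (ℤ/mℤ)* = A ⊔ (−A) ⊔ {λ} ⊔ {−λ} (disjoint union). Then there exist N ≤ 6 and a₁, …, a_N ∈ A with a₁ + ⋯ + a_N = 0 in ℤ/mℤ. -/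
lemma key {m : ℕ} (A : Set (ZMod m)) (a b : ZMod m) (ha : a ∈ A) (hb : b ∈ A)
    (x y : ℕ) (h1 : 1 ≤ x + y) (h2 : x + y ≤ 6) (h : x • a + y • b = 0) :
    ∃ N : ℕ, 1 ≤ N ∧ N ≤ 6 ∧
      ∃ f : Fin N → ZMod m, (∀ i, f i ∈ A) ∧ ∑ i, f i = 0 := by
  refine ⟨x + y, h1, h2, Fin.append (fun _ : Fin x => a) (fun _ : Fin y => b), ?_, ?_⟩
  · intro i
    rcases Nat.lt_or_ge i.val x with hi | hi
    · have : i = Fin.castAdd y ⟨i.val, hi⟩ := by ext; rfl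
      rw [this, Fin.append_left]; exact ha
    · have hiy : i.val - x < y := by omega
      have : i = Fin.natAdd x ⟨i.val - x, hiy⟩ := by ext; simp; omega
      rw [this, Fin.append_right]; exact hb
  · rw [Fin.sum_univ_add]
    simp [Fin.append_left, Fin.append_right, Finset.sum_const, Finset.card_univ]
    simpa using h

lemma main_aux {m : ℕ} [NeZero m]
    (arith : ∀ a b : ZMod m, a.val.Coprime m → b.val.Coprime m → a ≠ b → a ≠ -b →
      ∃ x y : Fin 7, 1 ≤ x.val + y.val ∧ x.val + y.val ≤ 6 ∧ x.val • a + y.val • b = 0)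
    (pairs : ∀ l : ZMod m, l.val.Coprime m → ∃ u v : ZMod m, u.val.Coprime m ∧ v.val.Coprime m ∧
      u ≠ v ∧ u ≠ -v ∧ u ≠ l ∧ u ≠ -l ∧ v ≠ l ∧ v ≠ -l)
    (A : Set (ZMod m)) (l : ZMod m)
    (hcover : {x : ZMod m | IsUnit x} = A ∪ (-A) ∪ {l, -l}) :
    ∃ N : ℕ, 1 ≤ N ∧ N ≤ 6 ∧
      ∃ a : Fin N → ZMod m, (∀ i, a i ∈ A) ∧ ∑ i, a i = 0 := by
  rw [Set.ext_iff] at hcover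
  have bridge : ∀ x : ZMod m, IsUnit x → x.val.Coprime m := fun x hx =>
    (ZMod.isUnit_iff_coprime x.val m).mp (by rwa [ZMod.natCast_val, ZMod.cast_id])
  have hl : IsUnit l := (hcover l).mpr (by right; left; rfl)
  obtain ⟨u, v, hu, hv, huv, huv', hul, hul', hvl, hvl'⟩ := pairs l (bridge l hl)
  have memA : ∀ w : ZMod m, w.val.Coprime m → w ≠ l → w ≠ -l → w ∈ A ∨ -w ∈ A := by
    intro w hw h1 h2
    have hwU : IsUnit w := by
      have := (ZMod.isUnit_iff_coprime w.val m).mpr hw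
      rwa [ZMod.natCast_val, ZMod.cast_id] at this
    have : w ∈ A ∪ (-A) ∪ {l, -l} := (hcover w).mp hwU
    rcases this with (h | h) | h
    · exact Or.inl h
    · exact Or.inr (Set.mem_neg.mp h)
    · rcases h with h | h
      · exact absurd h h1
      · exact absurd h h2
  have hA : A ⊆ {x : ZMod m | IsUnit x} := by
    intro x hx; exact (hcover x).mpr (Or.inl (Or.inl hx))
  obtain ha := memA u hu hul hul'
  obtain hb := memA v hv hvl hvl'
  have step : ∀ a b : ZMod m, a ∈ A → b ∈ A → a ≠ b → a ≠ -b →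
      ∃ N : ℕ, 1 ≤ N ∧ N ≤ 6 ∧ ∃ f : Fin N → ZMod m, (∀ i, f i ∈ A) ∧ ∑ i, f i = 0 := by
    intro a b haA hbA h1 h2
    obtain ⟨x, y, hx1, hx2, hs⟩ := arith a b (bridge a (hA haA)) (bridge b (hA hbA)) h1 h2
    exact key A a b haA hbA x.val y.val hx1 hx2 hs
  rcases ha with ha | ha <;> rcases hb with hb | hb
  · exact step u v ha hb huv huv'
  · exact step u (-v) ha hb (by simpa using huv') (by simpa using huv)
  · exact step (-u) v ha hb (fun h => huv' (by rw [← h]; simp)) (fun h => huv (neg_inj.mp h)) 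
  · exact step (-u) (-v) ha hb (by simpa using huv) (by simpa [neg_eq_iff_eq_neg] using huv')

lemma arith9 : ∀ a b : ZMod 9, a.val.Coprime 9 → b.val.Coprime 9 → a ≠ b → a ≠ -b → ∃ x y : Fin 7, 1 ≤ x.val + y.val ∧ x.val + y.val ≤ 6 ∧ x.val • a + y.val • b = 0 := by decide

lemma arith18 : ∀ a b : ZMod 18, a.val.Coprime 18 → b.val.Coprime 18 → a ≠ b → a ≠ -b → ∃ x y : Fin 7, 1 ≤ x.val + y.val ∧ x.val + y.val ≤ 6 ∧ x.val • a + y.val • b = 0 := by decide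

lemma pairs9 : ∀ l : ZMod 9, l.val.Coprime 9 → ∃ u v : ZMod 9, u.val.Coprime 9 ∧ v.val.Coprime 9 ∧ u ≠ v ∧ u ≠ -v ∧ u ≠ l ∧ u ≠ -l ∧ v ≠ l ∧ v ≠ -l := by decide

lemma pairs18 : ∀ l : ZMod 18, l.val.Coprime 18 → ∃ u v : ZMod 18, u.val.Coprime 18 ∧ v.val.Coprime 18 ∧ u ≠ v ∧ u ≠ -v ∧ u ≠ l ∧ u ≠ -l ∧ v ≠ l ∧ v ≠ -l := by decide

theorem stmt10 (m : ℕ) (hm : m = 9 ∨ m = 18)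
    (A : Set (ZMod m)) (l : ZMod m)
    (hcover : {x : ZMod m | IsUnit x} = A ∪ (-A) ∪ {l, -l})
    (hdisj : A ∩ (-A) = ∅) (hlA : l ∉ A ∪ (-A)) (hlA' : -l ∉ A ∪ (-A))
    (hll : l ≠ -l) :
    ∃ N : ℕ, 1 ≤ N ∧ N ≤ 6 ∧
      ∃ a : Fin N → ZMod m, (∀ i, a i ∈ A) ∧ ∑ i, a i = 0 := by
  rcases hm with rfl | rfl
  · exact main_aux arith9 pairs9 A l hcover
  · exact main_aux arith18 pairs18 A l hcover
end

section
/- Let o₁ ≤ o₂ ≤ o₃ be integers ≥ 2 with o₃ = lcm(o₁, o₂), and suppose the hyperbolicity condition 1/o₁ + 1/o₂ + 1/o₃ < 1 holds. If o₁ ≥ 4, then the minimal positive integer k with δ_k(o₁,o₂,o₃) := −2k + Σⱼ ⌊k(oⱼ−1)/oⱼ⌋ ≥ 1 satisfies k ≤ 4. -/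
lemma aux16 (o : ℕ) (h : 4 ≤ o) : 4 * (o - 1) / o = 3 :=
  Nat.div_eq_of_lt_le (by omega) (by omega)

theorem stmt16 (o₁ o₂ o₃ : ℕ) (h2 : 2 ≤ o₁) (h12 : o₁ ≤ o₂) (h23 : o₂ ≤ o₃)
    (hlcm : o₃ = Nat.lcm o₁ o₂)
    (hhyp : (1 : ℚ) / o₁ + 1 / o₂ + 1 / o₃ < 1) (h4 : 4 ≤ o₁) :
    ∃ k : ℕ, 1 ≤ k ∧ k ≤ 4 ∧
      (1 : ℤ) ≤ -2 * (k : ℤ) + ((k * (o₁ - 1) / o₁ : ℕ) : ℤ) +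
        ((k * (o₂ - 1) / o₂ : ℕ) : ℤ) + ((k * (o₃ - 1) / o₃ : ℕ) : ℤ) := by
  refine ⟨4, by norm_num, by norm_num, ?_⟩
  rw [aux16 o₁ h4, aux16 o₂ (by omega), aux16 o₃ (by omega)]
  norm_num
end
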